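/- For n ≥ 3, the set partitions of [n] with exactly k blocks avoiding both 13/2 and 12/3 are exactly those whose RGF is 1 2 3 ⋯ k^{n-k+1} (i.e., 123⋯(k-1) followed by n-k+1 copies of k); in particular there is exactly one such partition for each 1 ≤ k ≤ n. -/

import Mathlib

open Finset Polynomial

/-- Set partitions of `[n] = {1, …, n}`, modeled as finpartitions of `Fin n`. -/
abbrev SP (n : ℕ) := Finpartition (Finset.univ : Finset (Fin n))

noncomputable instance (n : ℕ) : Fintype (SP n) :=
  Fintype.ofInjective Finpartition.parts fun _ _ h => Finpartition.ext h

/-- `i` and `j` lie in the same block of the set partition `P`. -/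
def inSameBlock {n : ℕ} (P : SP n) (i j : Fin n) : Prop :=
  ∃ B ∈ P.parts, i ∈ B ∧ j ∈ B

/-- `P` avoids the pattern `1/2/3`: no three elements lie in three pairwise distinct blocks. -/
def avoids1_2_3 {n : ℕ} (P : SP n) : Prop :=
  ¬ ∃ a b c : Fin n, a < b ∧ b < c ∧
    ¬ inSameBlock P a b ∧ ¬ inSameBlock P b c ∧ ¬ inSameBlock P a c

/-- `P` avoids the pattern `13/2`. -/
def avoids13_2 {n : ℕ} (P : SP n) : Prop :=
  ¬ ∃ a b c : Fin n, a < b ∧ b < c ∧ inSameBlock P a c ∧ ¬ inSameBlock P a b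

/-- `P` avoids the pattern `1/23`. -/
def avoids1_23 {n : ℕ} (P : SP n) : Prop :=
  ¬ ∃ a b c : Fin n, a < b ∧ b < c ∧ inSameBlock P b c ∧ ¬ inSameBlock P a b

/-- `P` avoids the pattern `12/3`. -/
def avoids12_3 {n : ℕ} (P : SP n) : Prop :=
  ¬ ∃ a b c : Fin n, a < b ∧ b < c ∧ inSameBlock P a b ∧ ¬ inSameBlock P a c

/-- `P` avoids the pattern `123`: every block has at most two elements. -/
def avoids123 {n : ℕ} (P : SP n) : Prop :=
  ∀ B ∈ P.parts, B.card ≤ 2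

/-- The block of `P` containing `i`. -/
def blockOf {n : ℕ} (P : SP n) (i : Fin n) : Finset (Fin n) :=
  (P.parts.filter (fun B => i ∈ B)).sup id

/-- The restricted growth function of `P`: the letter at position `i` is the index
(starting from 1) of the block containing `i`, blocks being ordered by increasing minima. -/
def rgf {n : ℕ} (P : SP n) (i : Fin n) : ℕ :=
  (P.parts.filter (fun B => B.min ≤ (blockOf P i).min)).card

/-- The left-bigger statistic of Wachs and White. -/
def lbStat {n : ℕ} (w : Fin n → ℕ) : ℕ :=
  ∑ j : Fin n, (((Finset.univ.filter (fun i => i < j)).image w).filter (fun v => w j < v)).card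

/-- The left-smaller statistic of Wachs and White. -/
def lsStat {n : ℕ} (w : Fin n → ℕ) : ℕ :=
  ∑ j : Fin n, (((Finset.univ.filter (fun i => i < j)).image w).filter (fun v => v < w j)).card

/-- The right-bigger statistic of Wachs and White. -/
def rbStat {n : ℕ} (w : Fin n → ℕ) : ℕ :=
  ∑ j : Fin n, (((Finset.univ.filter (fun i => j < i)).image w).filter (fun v => w j < v)).card

/-- The right-smaller statistic of Wachs and White. -/
def rsStat {n : ℕ} (w : Fin n → ℕ) : ℕ :=
  ∑ j : Fin n, (((Finset.univ.filter (fun i => j < i)).image w).filter (fun v => v < w j)).card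

open Classical in
/-- The generating function `∑ q^{stat(π)}` over `k`-block partitions of `[n]` avoiding
a given family of patterns (described by the avoidance predicate `avoid`). -/
noncomputable def genPoly (n k : ℕ) (avoid : SP n → Prop) (stat : (Fin n → ℕ) → ℕ) :
    Polynomial ℕ :=
  ∑ P ∈ Finset.univ.filter (fun P : SP n => P.parts.card = k ∧ avoid P),
    Polynomial.X ^ (stat (rgf P))

/-! Avoiding `13/2` and `12/3` means that whenever `a < c` share a block, every `b ≥ a` joins
that block. So the block of the largest element is a final interval `{m, …, n-1}` and all other
blocks are singletons: the partition is determined by its number of blocks `m + 1`, and its RGF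
is `1 2 ⋯ m (m+1)^{n-m}`. Conversely this partition avoids both patterns. -/

theorem Finset.card_filter_le_injOn {α β : Type*} [LinearOrder β] {s : Finset α} {f : α → β}
    (hf : Set.InjOn f s) : Set.InjOn (fun b => #{a ∈ s | f a ≤ f b}) s := by
  have hlt : ∀ b ∈ s, ∀ c ∈ s, f b < f c → #{a ∈ s | f a ≤ f b} < #{a ∈ s | f a ≤ f c} := by
    intro b _ c hc hbc
    refine card_lt_card ((ssubset_iff_of_subset ?_).2 ⟨c, ?_, ?_⟩)
    · exact monotone_filter_right s fun _ _ h => h.trans hbc.le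
    · simp [hc]
    · simp [hbc]
  intro b hb c hc h
  rcases lt_trichotomy (f b) (f c) with hbc | hbc | hbc
  · exact absurd h (hlt b hb c hc hbc).ne
  · exact hf hb hc hbc
  · exact absurd h (hlt c hc b hb hbc).ne'

theorem Finpartition.min_injOn_parts {α : Type*} [LinearOrder α] {s : Finset α}
    (P : Finpartition s) : Set.InjOn Finset.min (P.parts : Set (Finset α)) := by
  intro B hB C hC h
  obtain ⟨b, hb⟩ := min_of_nonempty (P.nonempty_of_mem_parts hB)
  exact P.eq_of_mem_parts hB hC (mem_of_min hb) (mem_of_min (h ▸ hb))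

section SetPartition

variable {n : ℕ}

theorem inSameBlock_iff_mem_part (P : SP n) (i j : Fin n) :
    inSameBlock P i j ↔ j ∈ P.part i := by
  rw [Finpartition.mem_part_iff_exists]
  exact ⟨fun ⟨B, hB, hi, hj⟩ => ⟨B, hB, hj, hi⟩, fun ⟨B, hB, hj, hi⟩ => ⟨B, hB, hi, hj⟩⟩

theorem inSameBlock_iff_part_eq (P : SP n) (i j : Fin n) :
    inSameBlock P i j ↔ P.part i = P.part j := by
  rw [inSameBlock_iff_mem_part, P.mem_part_iff_part_eq_part (mem_univ j) (mem_univ i), eq_comm]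

theorem inSameBlock_refl (P : SP n) (i : Fin n) : inSameBlock P i i :=
  (inSameBlock_iff_part_eq P i i).2 rfl

theorem inSameBlock_comm {P : SP n} {i j : Fin n} : inSameBlock P i j ↔ inSameBlock P j i := by
  simp only [inSameBlock_iff_part_eq, eq_comm]

theorem blockOf_eq_part (P : SP n) (i : Fin n) : blockOf P i = P.part i := by
  have : P.parts.filter (i ∈ ·) = {P.part i} := by
    ext B
    simp only [mem_filter, mem_singleton]
    constructor
    · rintro ⟨hB, hi⟩
      exact (P.part_eq_of_mem hB hi).symm
    · rintro rfl
      exact ⟨P.part_mem.2 (mem_univ i), P.mem_part (mem_univ i)⟩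
  rw [blockOf, this, sup_singleton, id]

theorem rgf_eq_rgf_iff (P : SP n) (i j : Fin n) : rgf P i = rgf P j ↔ inSameBlock P i j := by
  rw [inSameBlock_iff_part_eq]
  simp only [rgf, blockOf_eq_part]
  exact (card_filter_le_injOn P.min_injOn_parts).eq_iff
    (P.part_mem.2 (mem_univ i)) (P.part_mem.2 (mem_univ j))

theorem parts_eq_image_part (P : SP n) : P.parts = univ.image P.part := by
  ext B
  simp only [mem_image, mem_univ, true_and]
  refine ⟨fun hB => ?_, fun ⟨i, hi⟩ => hi ▸ P.part_mem.2 (mem_univ i)⟩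
  obtain ⟨i, -, hi⟩ := P.part_surjOn hB
  exact ⟨i, hi⟩

theorem eq_of_inSameBlock_iff {P Q : SP n} (h : ∀ i j, inSameBlock P i j ↔ inSameBlock Q i j) :
    P = Q := by
  have hpart : P.part = Q.part := by
    ext i j
    rw [← inSameBlock_iff_mem_part, ← inSameBlock_iff_mem_part, h]
  exact Finpartition.ext (by rw [parts_eq_image_part P, parts_eq_image_part Q, hpart])

theorem eq_of_rgf_eq {P Q : SP n} (h : rgf P = rgf Q) : P = Q :=
  eq_of_inSameBlock_iff fun i j => by rw [← rgf_eq_rgf_iff, ← rgf_eq_rgf_iff, h]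

theorem rgf_eq_card_image_part_Iic (P : SP n) {i c : Fin n} (hc : (P.part i).min = c) :
    rgf P i = #((Iic c).image P.part) := by
  rw [rgf, blockOf_eq_part, hc]
  congr 1
  ext B
  simp only [mem_filter, mem_image, mem_Iic]
  constructor
  · rintro ⟨hB, hBc⟩
    obtain ⟨b, hb⟩ := min_of_nonempty (P.nonempty_of_mem_parts hB)
    rw [hb, WithTop.coe_le_coe] at hBc
    exact ⟨b, hBc, P.part_eq_of_mem hB (mem_of_min hb)⟩
  · rintro ⟨j, hjc, rfl⟩
    exact ⟨P.part_mem.2 (mem_univ j),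
      (min_le (P.mem_part (mem_univ j))).trans (WithTop.coe_le_coe.2 hjc)⟩

end SetPartition

def tailSetoid (n m : ℕ) : Setoid (Fin n) where
  r i j := i = j ∨ (m ≤ (i : ℕ) ∧ m ≤ (j : ℕ))
  iseqv := by
    refine ⟨fun _ => Or.inl rfl, ?_, ?_⟩
    · rintro i j (rfl | ⟨hi, hj⟩)
      exacts [Or.inl rfl, Or.inr ⟨hj, hi⟩]
    · rintro i j l (rfl | hij) (rfl | hjl)
      exacts [Or.inl rfl, Or.inr hjl, Or.inr hij, Or.inr ⟨hij.1, hjl.2⟩]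

instance (n m : ℕ) : DecidableRel (tailSetoid n m).r := fun i j =>
  inferInstanceAs (Decidable (i = j ∨ (m ≤ (i : ℕ) ∧ m ≤ (j : ℕ))))

def tailPartition (n m : ℕ) : SP n := Finpartition.ofSetoid (tailSetoid n m)

section TailPartition

variable {n m : ℕ}

theorem mem_part_tailPartition {i j : Fin n} :
    j ∈ (tailPartition n m).part i ↔ i = j ∨ (m ≤ (i : ℕ) ∧ m ≤ (j : ℕ)) :=
  Finpartition.mem_part_ofSetoid_iff_rel

theorem inSameBlock_tailPartition {i j : Fin n} :
    inSameBlock (tailPartition n m) i j ↔ i = j ∨ (m ≤ (i : ℕ) ∧ m ≤ (j : ℕ)) := by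
  rw [inSameBlock_iff_mem_part, mem_part_tailPartition]

theorem avoids13_2_tailPartition : avoids13_2 (tailPartition n m) := by
  rintro ⟨a, b, c, hab, hbc, hac, hab'⟩
  rw [inSameBlock_tailPartition] at hac hab'
  rw [Fin.lt_def] at hab hbc
  rcases hac with rfl | ⟨ha, -⟩
  · omega
  · exact hab' (Or.inr ⟨ha, by omega⟩)

theorem avoids12_3_tailPartition : avoids12_3 (tailPartition n m) := by
  rintro ⟨a, b, c, hab, hbc, hab', hac⟩
  rw [inSameBlock_tailPartition] at hab' hac
  rw [Fin.lt_def] at hab hbc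
  rcases hab' with rfl | ⟨ha, -⟩
  · omega
  · exact hac (Or.inr ⟨ha, by omega⟩)

theorem card_image_part_Iic_tailPartition {c : Fin n} (hc : (c : ℕ) ≤ m) :
    #((Iic c).image (tailPartition n m).part) = c + 1 := by
  rw [card_image_of_injOn, Fin.card_Iic]
  intro a ha b hb hab
  have hb' : b ∈ (tailPartition n m).part a := hab ▸ Finpartition.mem_part _ (mem_univ b)
  rw [mem_part_tailPartition] at hb'
  simp only [coe_Iic, Set.mem_Iic, Fin.le_def] at ha hb
  rcases hb' with h | ⟨ha', hb'⟩
  · exact h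
  · exact Fin.ext (by omega)

variable (hm : m < n)
include hm

theorem part_min_tailPartition (i : Fin n) :
    (tailPartition n m).part (min i ⟨m, hm⟩) = (tailPartition n m).part i := by
  refine Finpartition.part_eq_of_mem _ ((tailPartition n m).part_mem.2 (mem_univ i)) ?_
  rw [mem_part_tailPartition]
  rcases le_total i ⟨m, hm⟩ with h | h
  · exact Or.inl (min_eq_left h).symm
  · rw [min_eq_right h]
    exact Or.inr ⟨Fin.le_def.1 h, le_rfl⟩

theorem min_part_tailPartition (i : Fin n) :
    ((tailPartition n m).part i).min = ↑(min i ⟨m, hm⟩) := by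
  refine le_antisymm (min_le ?_) (Finset.le_min fun j hj => WithTop.coe_le_coe.2 ?_)
  · rw [← part_min_tailPartition hm]
    exact Finpartition.mem_part _ (mem_univ _)
  · rw [mem_part_tailPartition] at hj
    rcases hj with rfl | ⟨-, hj⟩
    · exact min_le_left _ _
    · exact (min_le_right _ _).trans (Fin.le_def.2 hj)

theorem rgf_tailPartition (i : Fin n) : rgf (tailPartition n m) i = min (i : ℕ) m + 1 := by
  rw [rgf_eq_card_image_part_Iic _ (min_part_tailPartition hm i),
    card_image_part_Iic_tailPartition (by simp), Fin.coe_min]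

theorem card_parts_tailPartition : #(tailPartition n m).parts = m + 1 := by
  have : univ.image (tailPartition n m).part = (Iic ⟨m, hm⟩).image (tailPartition n m).part := by
    ext B
    simp only [mem_image, mem_univ, true_and, mem_Iic]
    refine ⟨fun ⟨i, hi⟩ => ⟨min i ⟨m, hm⟩, min_le_right _ _, ?_⟩, fun ⟨i, _, hi⟩ => ⟨i, hi⟩⟩
    rw [part_min_tailPartition hm, hi]
  rw [parts_eq_image_part, this]
  exact card_image_part_Iic_tailPartition (c := ⟨m, hm⟩) le_rfl

end TailPartition

section Avoidance

variable {n : ℕ} {P : SP n}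

theorem inSameBlock_of_le_of_avoids (h13 : avoids13_2 P) (h12 : avoids12_3 P) {a b c : Fin n}
    (hac : a < c) (h : inSameBlock P a c) (hab : a ≤ b) : inSameBlock P a b := by
  rcases hab.lt_or_eq with hab | rfl
  · by_contra hb
    rcases lt_trichotomy b c with hbc | rfl | hcb
    · exact h13 ⟨a, b, c, hab, hbc, h, hb⟩
    · exact hb h
    · exact h12 ⟨a, c, b, hac, hcb, h, hb⟩
  · exact inSameBlock_refl P a

theorem exists_eq_tailPartition_of_avoids [NeZero n] (h13 : avoids13_2 P) (h12 : avoids12_3 P) :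
    ∃ m < n, P = tailPartition n m := by
  set t := (P.part ⊤).min' ⟨⊤, P.mem_part (mem_univ ⊤)⟩
  have ht : t ∈ P.part ⊤ := min'_mem _ _
  have h_of_lt : ∀ i j, i < j → inSameBlock P i j → t ≤ i := fun i j hij h =>
    have hi := inSameBlock_of_le_of_avoids h13 h12 hij h le_top
    min'_le _ _ ((inSameBlock_iff_part_eq P i ⊤).1 hi ▸ P.mem_part (mem_univ i))
  have h_of_ge : ∀ i, t ≤ i → P.part i = P.part t := fun i hti => by
    rcases (le_top : t ≤ ⊤).lt_or_eq with htop | htop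
    · have htop' : inSameBlock P t ⊤ := (inSameBlock_iff_part_eq P t ⊤).2
        (P.part_eq_of_mem (P.part_mem.2 (mem_univ ⊤)) ht)
      exact ((inSameBlock_iff_part_eq P t i).1
        (inSameBlock_of_le_of_avoids h13 h12 htop htop' hti)).symm
    · rw [le_antisymm (le_top.trans_eq htop.symm) hti]
  refine ⟨t, t.isLt, eq_of_inSameBlock_iff fun i j => ?_⟩
  rw [inSameBlock_tailPartition, ← Fin.le_def, ← Fin.le_def]
  constructor
  · intro h
    rcases lt_trichotomy i j with hij | rfl | hji
    · exact Or.inr ⟨h_of_lt i j hij h, (h_of_lt i j hij h).trans hij.le⟩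
    · exact Or.inl rfl
    · have h' := inSameBlock_comm.1 h
      exact Or.inr ⟨(h_of_lt j i hji h').trans hji.le, h_of_lt j i hji h'⟩
  · rintro (rfl | ⟨hi, hj⟩)
    · exact inSameBlock_refl P i
    · exact (inSameBlock_iff_part_eq P i j).2 ((h_of_ge i hi).trans (h_of_ge j hj).symm)

end Avoidance

theorem stmt8_general (n k : ℕ) (hk1 : 1 ≤ k) (hkn : k ≤ n) :
    (∀ P : SP n, (P.parts.card = k ∧ avoids13_2 P ∧ avoids12_3 P) ↔
      ∀ i : Fin n, rgf P i = if (i : ℕ) < k then (i : ℕ) + 1 else k) ∧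
    Nat.card {P : SP n // P.parts.card = k ∧ avoids13_2 P ∧ avoids12_3 P} = 1 := by
  have : NeZero n := ⟨by omega⟩
  have hm : k - 1 < n := by omega
  have hrgf : rgf (tailPartition n (k - 1)) =
      fun i : Fin n => if (i : ℕ) < k then (i : ℕ) + 1 else k := by
    ext i
    rw [rgf_tailPartition hm]
    split_ifs <;> omega
  have hchar : ∀ P : SP n, (P.parts.card = k ∧ avoids13_2 P ∧ avoids12_3 P) ↔
      P = tailPartition n (k - 1) := by
    refine fun P => ⟨fun ⟨hk, h13, h12⟩ => ?_, ?_⟩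
    · obtain ⟨m, hmn, rfl⟩ := exists_eq_tailPartition_of_avoids h13 h12
      rw [card_parts_tailPartition hmn] at hk
      rw [← hk, Nat.add_sub_cancel]
    · rintro rfl
      exact ⟨by rw [card_parts_tailPartition hm]; omega, avoids13_2_tailPartition,
        avoids12_3_tailPartition⟩
  refine ⟨fun P => (hchar P).trans ⟨?_, fun h => eq_of_rgf_eq (hrgf ▸ funext h)⟩, ?_⟩
  · rintro rfl
    exact congrFun hrgf
  · rw [Nat.card_congr (Equiv.subtypeEquivRight hchar), Nat.card_unique]

/-- For `n ≥ 3` and `1 ≤ k ≤ n`, the `k`-block set partitions of `[n]`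
avoiding both `13/2` and `12/3` are exactly those whose RGF is `1 2 ⋯ (k-1) k^{n-k+1}`;
in particular there is exactly one such partition. -/
theorem stmt8 (n k : ℕ) (hn : 3 ≤ n) (hk1 : 1 ≤ k) (hkn : k ≤ n) :
    (∀ P : SP n, (P.parts.card = k ∧ avoids13_2 P ∧ avoids12_3 P) ↔
      ∀ i : Fin n, rgf P i = if (i : ℕ) < k then (i : ℕ) + 1 else k) ∧
    Nat.card {P : SP n // P.parts.card = k ∧ avoids13_2 P ∧ avoids12_3 P} = 1 :=
  stmt8_general n k hk1 hkn
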